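/- Let G be a connected bipartite graph with p vertices in one partite set and q vertices in the other. Then DE(G) ≥ 2·(p + q − 2 + √(p² + q² − pq)). -/

import Mathlib

open SimpleGraph Finset

/-- The distance matrix of a graph `G`: the `(i,j)` entry is the graph distance
between `i` and `j`, as a real number. -/
noncomputable def distMatrix {V : Type*} [Fintype V] (G : SimpleGraph V) : Matrix V V ℝ :=
  fun i j => (G.dist i j : ℝ)

lemma distMatrix_isHermitian {V : Type*} [Fintype V] (G : SimpleGraph V) :
    (distMatrix G).IsHermitian := by
  unfold Matrix.IsHermitian
  ext i j
  simp [distMatrix, Matrix.conjTranspose_apply, SimpleGraph.dist_comm]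

/-- The distance spectral radius of `G`: the largest eigenvalue of the distance matrix. -/
noncomputable def distSpectralRadius {V : Type*} [Fintype V] [DecidableEq V]
    (G : SimpleGraph V) : ℝ :=
  ⨆ i, (distMatrix_isHermitian G).eigenvalues i

/-- The distance energy of `G`: the sum of the absolute values of the eigenvalues of
the distance matrix. -/
noncomputable def distEnergy {V : Type*} [Fintype V] [DecidableEq V]
    (G : SimpleGraph V) : ℝ :=
  ∑ i, |(distMatrix_isHermitian G).eigenvalues i|

/-!
The distance matrix `D` has zero trace, so its eigenvalues sum to zero and `DE(G) ≥ 2ρ`, where `ρ`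
is its largest eigenvalue. Every edge joins the two parts, so vertices in the same part are at
distance at least `2`: entrywise, `D` dominates the distance matrix of the complete bipartite graph
`K_{p,q}`. With `s = √(p² + q² - pq)`, the latter has the positive eigenvector equal to `q` on the
first part and `q - p + s` on the second, with eigenvalue `p + q - 2 + s`; comparing the quadratic
forms of the two matrices at this vector gives `ρ ≥ p + q - 2 + s`.
-/

open Matrix

theorem Finset.two_mul_le_sum_abs_of_sum_eq_zero {ι : Type*} [Fintype ι] {f : ι → ℝ}
    (hf : ∑ i, f i = 0) (k : ι) : 2 * f k ≤ ∑ i, |f i| :=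
  calc 2 * f k ≤ |f k| + f k := by linarith [le_abs_self (f k)]
    _ ≤ ∑ i, (|f i| + f i) :=
      single_le_sum (f := fun i => |f i| + f i) (fun i _ => by linarith [neg_abs_le (f i)])
        (mem_univ k)
    _ = ∑ i, |f i| := by rw [sum_add_distrib, hf, add_zero]

theorem Finset.sum_ite_eq_zero_else_const {ι : Type*} [DecidableEq ι] {s : Finset ι} {i : ι}
    (hi : i ∈ s) (c : ℝ) : ∑ j ∈ s, (if i = j then 0 else c) = (#s - 1) * c := by
  simp [sum_ite, filter_ne, hi, Nat.cast_pred (card_pos.2 ⟨i, hi⟩)]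

theorem Matrix.dotProduct_mulVec_le_of_le {ι R : Type*} [Fintype ι] [CommSemiring R]
    [PartialOrder R] [IsOrderedRing R] {M N : Matrix ι ι R} (hMN : ∀ i j, M i j ≤ N i j)
    {x : ι → R} (hx : 0 ≤ x) : x ⬝ᵥ (M *ᵥ x) ≤ x ⬝ᵥ (N *ᵥ x) :=
  sum_le_sum fun i _ => mul_le_mul_of_nonneg_left
    (sum_le_sum fun j _ => mul_le_mul_of_nonneg_right (hMN i j) (hx j)) (hx i)

namespace Matrix.IsHermitian

variable {ι : Type*} [Fintype ι] [DecidableEq ι] {A : Matrix ι ι ℝ}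

theorem dotProduct_mulVec_le (hA : A.IsHermitian) {μ : ℝ} (hμ : ∀ i, hA.eigenvalues i ≤ μ)
    (x : ι → ℝ) : x ⬝ᵥ (A *ᵥ x) ≤ μ * (x ⬝ᵥ x) := by
  have hconj : μ • 1 - A = Unitary.conjStarAlgAut ℝ _ hA.eigenvectorUnitary
      (diagonal fun i => μ - hA.eigenvalues i) := by
    conv_lhs => rw [hA.spectral_theorem]
    rw [← map_one (Unitary.conjStarAlgAut ℝ _ hA.eigenvectorUnitary), ← map_smul, ← map_sub,
      smul_one_eq_diagonal, diagonal_sub]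
    rfl
  have hpsd : (μ • 1 - A).PosSemidef := by
    rw [hconj, Unitary.conjStarAlgAut_apply, star_eq_conjTranspose]
    exact (PosSemidef.diagonal fun i => sub_nonneg.2 (hμ i)).mul_mul_conjTranspose_same _
  have := hpsd.dotProduct_mulVec_nonneg x
  rw [star_trivial, sub_mulVec, dotProduct_sub, smul_mulVec, one_mulVec, dotProduct_smul,
    smul_eq_mul] at this
  linarith

theorem le_of_mulVec_eq_smul_of_le (hA : A.IsHermitian) {μ : ℝ} (hμ : ∀ i, hA.eigenvalues i ≤ μ)
    {M : Matrix ι ι ℝ} (hMA : ∀ i j, M i j ≤ A i j) {x : ι → ℝ} (hx : 0 ≤ x) (hx0 : x ≠ 0)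
    {c : ℝ} (hMx : M *ᵥ x = c • x) : c ≤ μ := by
  have hxx : 0 < x ⬝ᵥ x := by simpa using dotProduct_star_self_pos_iff.2 hx0
  refine le_of_mul_le_mul_right ?_ hxx
  calc c * (x ⬝ᵥ x) = x ⬝ᵥ (M *ᵥ x) := by rw [hMx, dotProduct_smul, smul_eq_mul]
    _ ≤ x ⬝ᵥ (A *ᵥ x) := dotProduct_mulVec_le_of_le hMA hx
    _ ≤ μ * (x ⬝ᵥ x) := hA.dotProduct_mulVec_le hμ x

end Matrix.IsHermitian

theorem trace_distMatrix {V : Type*} [Fintype V] (G : SimpleGraph V) :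
    (distMatrix G).trace = 0 := by
  simp [Matrix.trace, distMatrix]

section DistanceMatrix

variable {V : Type*} [Fintype V] [DecidableEq V]

theorem eigenvalues_distMatrix_le_distSpectralRadius (G : SimpleGraph V) (i : V) :
    (distMatrix_isHermitian G).eigenvalues i ≤ distSpectralRadius G :=
  le_ciSup (Set.finite_range _).bddAbove i

theorem two_mul_distSpectralRadius_le_distEnergy [Nonempty V] (G : SimpleGraph V) :
    2 * distSpectralRadius G ≤ distEnergy G := by
  obtain ⟨k, hk⟩ := exists_eq_ciSup_of_finite (f := (distMatrix_isHermitian G).eigenvalues)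
  have hsum : ∑ i, (distMatrix_isHermitian G).eigenvalues i = 0 := by
    simpa [trace_distMatrix] using (distMatrix_isHermitian G).trace_eq_sum_eigenvalues.symm
  rw [distSpectralRadius, ← hk]
  exact two_mul_le_sum_abs_of_sum_eq_zero hsum k

end DistanceMatrix

def completeBipartiteDistMatrix {V : Type*} [DecidableEq V] (A : Finset V) : Matrix V V ℝ :=
  fun i j => if i = j then 0 else if (i ∈ A ↔ j ∈ A) then 2 else 1

section CompleteBipartite

variable {V : Type*} [Fintype V] [DecidableEq V]

theorem completeBipartiteDistMatrix_le_distMatrix {G : SimpleGraph V} (hG : G.Connected)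
    {A : Finset V} (hA : ∀ x y, G.Adj x y → ¬(x ∈ A ↔ y ∈ A)) (i j : V) :
    completeBipartiteDistMatrix A i j ≤ distMatrix G i j := by
  unfold completeBipartiteDistMatrix distMatrix
  split_ifs with hij hside
  · simp [hij]
  · have hpos : 0 < G.dist i j := hG.pos_dist_of_ne hij
    have hne : G.dist i j ≠ 1 := fun h => hA i j (dist_eq_one_iff_adj.1 h) hside
    exact_mod_cast (by omega : 2 ≤ G.dist i j)
  · exact_mod_cast hG.pos_dist_of_ne hij

theorem completeBipartiteDistMatrix_compl (A : Finset V) :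
    completeBipartiteDistMatrix Aᶜ = completeBipartiteDistMatrix A := by
  ext i j
  simp [completeBipartiteDistMatrix, not_iff_not]

theorem completeBipartiteDistMatrix_mulVec_apply_of_mem (A : Finset V) (a b : ℝ) {i : V}
    (hi : i ∈ A) :
    (completeBipartiteDistMatrix A *ᵥ fun j => if j ∈ A then a else b) i =
      2 * (#A - 1) * a + #Aᶜ * b := by
  have hrowA : ∀ j ∈ A, completeBipartiteDistMatrix A i j * (if j ∈ A then a else b) =
      if i = j then 0 else 2 * a := by
    intro j hj
    simp [completeBipartiteDistMatrix, hi, hj]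
  have hrowAc : ∀ j ∈ Aᶜ, completeBipartiteDistMatrix A i j * (if j ∈ A then a else b) = b := by
    intro j hj
    rw [mem_compl] at hj
    simp [completeBipartiteDistMatrix, hi, hj, ne_of_mem_of_not_mem hi hj]
  rw [mulVec, dotProduct, ← sum_add_sum_compl A, sum_congr rfl hrowA, sum_congr rfl hrowAc,
    sum_ite_eq_zero_else_const hi, sum_const, nsmul_eq_mul]
  ring

theorem completeBipartiteDistMatrix_mulVec_apply (A : Finset V) (a b : ℝ) (i : V) :
    (completeBipartiteDistMatrix A *ᵥ fun j => if j ∈ A then a else b) i =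
      if i ∈ A then 2 * (#A - 1) * a + #Aᶜ * b else #A * a + 2 * (#Aᶜ - 1) * b := by
  split_ifs with hi
  · exact completeBipartiteDistMatrix_mulVec_apply_of_mem A a b hi
  · have h := completeBipartiteDistMatrix_mulVec_apply_of_mem Aᶜ b a (mem_compl.2 hi)
    simp only [completeBipartiteDistMatrix_compl, compl_compl, mem_compl, ite_not] at h
    rw [h]
    ring

theorem completeBipartiteDistMatrix_mulVec_eq_smul (A : Finset V) {s : ℝ}
    (hs : s ^ 2 = #A ^ 2 + #Aᶜ ^ 2 - #A * #Aᶜ) :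
    completeBipartiteDistMatrix A *ᵥ (fun j => if j ∈ A then (#Aᶜ : ℝ) else #Aᶜ - #A + s) =
      (#A + #Aᶜ - 2 + s) • fun j => if j ∈ A then (#Aᶜ : ℝ) else #Aᶜ - #A + s := by
  ext i
  rw [completeBipartiteDistMatrix_mulVec_apply, Pi.smul_apply, smul_eq_mul]
  split_ifs
  · ring
  · linear_combination -hs

end CompleteBipartite

theorem le_distSpectralRadius_of_bipartite {V : Type*} [Fintype V] [DecidableEq V]
    {G : SimpleGraph V} (hG : G.Connected) {A : Finset V}
    (hA : ∀ x y, G.Adj x y → ¬(x ∈ A ↔ y ∈ A)) (hAc : Aᶜ.Nonempty) :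
    (#A + #Aᶜ - 2 + √(#A ^ 2 + #Aᶜ ^ 2 - #A * #Aᶜ) : ℝ) ≤ distSpectralRadius G := by
  have hq : (0 : ℝ) < #Aᶜ := by exact_mod_cast hAc.card_pos
  have hp : (0 : ℝ) ≤ #A := by positivity
  set p : ℝ := (#A : ℝ)
  set q : ℝ := (#Aᶜ : ℝ)
  set s := √(p ^ 2 + q ^ 2 - p * q)
  have hs : s ^ 2 = p ^ 2 + q ^ 2 - p * q := Real.sq_sqrt (by nlinarith [sq_nonneg (p - q)])
  have hb : 0 < q - p + s := by nlinarith [Real.sqrt_nonneg (p ^ 2 + q ^ 2 - p * q)]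
  obtain ⟨j, hj⟩ := hAc
  refine (distMatrix_isHermitian G).le_of_mulVec_eq_smul_of_le
    (eigenvalues_distMatrix_le_distSpectralRadius G)
    (completeBipartiteDistMatrix_le_distMatrix hG hA) ?_ ?_
    (completeBipartiteDistMatrix_mulVec_eq_smul A hs)
  · intro i
    dsimp only [Pi.zero_apply]
    split_ifs <;> positivity
  · refine Function.ne_iff.2 ⟨j, ?_⟩
    simp only [mem_compl.1 hj, if_false, Pi.zero_apply]
    exact hb.ne'

/-- **Theorem 8.** For a connected bipartite graph `G` with `p` vertices in one partite
set and `q` in the other, `DE(G) ≥ 2(p + q - 2 + √(p² + q² - pq))`. -/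
theorem distEnergy_bipartite_lower_bound {n : ℕ} (G : SimpleGraph (Fin n))
    (hconn : G.Connected) (A B : Finset (Fin n)) (p q : ℕ)
    (hdisj : Disjoint A B) (hcover : A ∪ B = Finset.univ)
    (hA : A.card = p) (hB : B.card = q)
    (hbip : ∀ x y : Fin n, G.Adj x y → (x ∈ A ∧ y ∈ B) ∨ (x ∈ B ∧ y ∈ A)) :
    2 * ((p : ℝ) + (q : ℝ) - 2 +
        Real.sqrt ((p : ℝ) ^ 2 + (q : ℝ) ^ 2 - (p : ℝ) * (q : ℝ))) ≤
      distEnergy G := by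
  wlog hq : 0 < q generalizing A B p q
  · have hn : 0 < n := Fin.pos_iff_nonempty.2 hconn.nonempty
    have hpq : p + q = n := by
      rw [← hA, ← hB, ← card_union_of_disjoint hdisj, hcover, card_fin]
    have hp : 0 < p := by omega
    convert this B A q p hdisj.symm (union_comm A B ▸ hcover) hB hA
      (fun x y h => (hbip x y h).symm) hp using 4 <;> ring
  have hBA : B = Aᶜ := (IsCompl.compl_eq ⟨hdisj, codisjoint_iff.2 hcover⟩).symm
  subst hBA hA hB
  have hside : ∀ x y, G.Adj x y → ¬(x ∈ A ↔ y ∈ A) := by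
    intro x y h
    have hAB := disjoint_left.1 hdisj
    rcases hbip x y h with ⟨hx, hy⟩ | ⟨hx, hy⟩ <;> simp_all
  have : Nonempty (Fin n) := hconn.nonempty
  calc _ ≤ 2 * distSpectralRadius G := by
        gcongr
        exact le_distSpectralRadius_of_bipartite hconn hside (card_pos.1 hq)
    _ ≤ distEnergy G := two_mul_distSpectralRadius_le_distEnergy G
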